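/- Let ψ be a branching mechanism of Lévy–Khintchine form with δ > 1. Then the integral I(v) = ∫_v^∞ (∫_v^b ψ(a) da)^{−1/2} db is finite for every v > 0, and there exists a constant C₁ ∈ (0,∞), depending only on ψ, such that: (a) I(v) ≤ (C₁·v/ψ(v))^{1/2} for every v ≥ 1; and (b) for every v ∈ (1,∞) and every r ∈ (0,∞) with r ≤ I(v), one has ψ′(v) ≤ 4C₁·r^{−2} (equivalently, v ≤ ψ′^{−1}(4C₁·r^{−2})). -/

import Mathlib

open MeasureTheory Filter Set

noncomputable section

/-- The branching mechanism `ψ(λ) = αλ + βλ² + ∫_{(0,∞)} (e^{−λr} − 1 + λr) π(dr)`. -/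
def psiFun (α β : ℝ) (π : Measure ℝ) : ℝ → ℝ := fun l =>
  α * l + β * l ^ 2 + ∫ r, (Real.exp (-(l * r)) - 1 + l * r) ∂π

/-- `ψ′(λ) = α + 2βλ + ∫_{(0,∞)} r(1 − e^{−λr}) π(dr)`. -/
def psiDeriv (α β : ℝ) (π : Measure ℝ) : ℝ → ℝ := fun l =>
  α + 2 * β * l + ∫ r, r * (1 - Real.exp (-(l * r))) ∂π

/-- `(α, β, π)` is the datum of a (sub)critical branching mechanism of
Lévy–Khintchine form: `α, β ≥ 0`, `π` is a Borel measure carried by `(0,∞)`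
with `∫ min(r, r²) π(dr) < ∞`. -/
structure IsBranchingMechanism (α β : ℝ) (π : Measure ℝ) : Prop where
  alpha_nonneg : 0 ≤ α
  beta_nonneg : 0 ≤ β
  carried_on_pos : π (Set.Iic 0) = 0
  integ_min : Integrable (fun r => min r (r ^ 2)) π

/-- The lower index `γ_f = sup {c ≥ 0 : f(λ)λ^{−c} → ∞}` (with `sup ∅ = 0`). -/
def lowerIndex (f : ℝ → ℝ) : ℝ :=
  sSup {c : ℝ | 0 ≤ c ∧ Tendsto (fun l : ℝ => f l * l ^ (-c)) atTop atTop}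

/-- The upper index `η_f = inf {c ≥ 0 : f(λ)λ^{−c} → 0}`. -/
def upperIndex (f : ℝ → ℝ) : ℝ :=
  sInf {c : ℝ | 0 ≤ c ∧ Tendsto (fun l : ℝ => f l * l ^ (-c)) atTop (nhds 0)}

/-- `δ_f = sup {c ≥ 0 : ∃ C > 0, ∀ 1 ≤ μ ≤ λ, C f(μ)μ^{−c} ≤ f(λ)λ^{−c}}`. -/
def deltaIndex (f : ℝ → ℝ) : ℝ :=
  sSup {c : ℝ | 0 ≤ c ∧ ∃ C : ℝ, 0 < C ∧
    ∀ μ l : ℝ, 1 ≤ μ → μ ≤ l → C * (f μ * μ ^ (-c)) ≤ f l * l ^ (-c)}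

/-! Since `δ > 1` there are `c > 1` and `C > 0` with `ψ(λ) ≥ C ψ(μ) (λ/μ)^c` for `1 ≤ μ ≤ λ`.
Split `I(v)` at `2v`. On `(v, 2v]`, monotonicity gives `∫_v^b ψ ≥ ψ(v) (b - v)`, whose inverse
square root integrates to `2 √(v/ψ(v))`. Beyond `2v`,
`∫_v^b ψ ≥ (b/2) ψ(b/2) ≥ C v ψ(v) (b/2v)^(c+1)`, whose inverse square root is integrable because
`c > 1` and contributes `4/((c-1)√C) · √(v/ψ(v))`. Part (b) follows from (a) and
`λ ψ'(λ) ≤ 2 ψ(λ)`, the integrated form of `x (1 - e⁻ˣ) ≤ 2 (e⁻ˣ - 1 + x)`. -/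

lemma exp_neg_sub_one_add_nonneg (x : ℝ) : 0 ≤ Real.exp (-x) - 1 + x := by
  linarith [Real.add_one_le_exp (-x)]

lemma exp_neg_sub_one_add_pos {x : ℝ} (hx : x ≠ 0) : 0 < Real.exp (-x) - 1 + x := by
  linarith [Real.add_one_lt_exp (neg_ne_zero.2 hx)]

lemma exp_neg_sub_one_add_le_self {x : ℝ} (hx : 0 ≤ x) : Real.exp (-x) - 1 + x ≤ x := by
  linarith [Real.exp_le_one_iff.2 (neg_nonpos.2 hx)]

lemma exp_neg_sub_one_add_le_sq {x : ℝ} (hx : 0 ≤ x) : Real.exp (-x) - 1 + x ≤ x ^ 2 := by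
  rcases le_total x 1 with hx1 | hx1
  · have := Real.abs_exp_sub_one_sub_id_le (x := -x) (by rwa [abs_neg, abs_of_nonneg hx])
    rw [neg_sq] at this
    linarith [le_abs_self (Real.exp (-x) - 1 - -x)]
  · nlinarith [exp_neg_sub_one_add_le_self hx]

lemma monotoneOn_exp_neg_sub_one_add :
    MonotoneOn (fun x => Real.exp (-x) - 1 + x) (Ici 0) := by
  intro x hx y _ hxy
  have hexp : Real.exp (-y) = Real.exp (-x) * Real.exp (-(y - x)) := by
    rw [← Real.exp_add]; ring_nf
  have h₁ := Real.add_one_le_exp (-(y - x))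
  have h₂ : Real.exp (-x) ≤ 1 := Real.exp_le_one_iff.2 (neg_nonpos.2 hx)
  simp only
  nlinarith [Real.exp_pos (-x)]

/-- `g(x) = (2 + x) e⁻ˣ - 2 + x`, the difference of the two sides, vanishes at `0` and has
derivative `1 - (1 + x) e⁻ˣ ≥ 0`. -/
lemma mul_one_sub_exp_neg_le {x : ℝ} (hx : 0 ≤ x) :
    x * (1 - Real.exp (-x)) ≤ 2 * (Real.exp (-x) - 1 + x) := by
  let g : ℝ → ℝ := fun x => (2 + x) * Real.exp (-x) - 2 + x
  have hg : ∀ y, HasDerivAt g (1 - (1 + y) * Real.exp (-y)) y := fun y => by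
    have := (((hasDerivAt_id y).const_add 2).mul (hasDerivAt_neg y).exp).sub_const 2
      |>.add (hasDerivAt_id y)
    exact this.congr_deriv (by simp only [id]; ring)
  have hmono : MonotoneOn g (Ici 0) :=
    monotoneOn_of_hasDerivWithinAt_nonneg (convex_Ici 0)
      (fun y _ => (hg y).continuousAt.continuousWithinAt)
      (fun y _ => (hg y).hasDerivWithinAt)
      (fun y _ => by
        have := Real.add_one_le_exp y
        rw [Real.exp_neg, sub_nonneg, ← div_eq_mul_inv, div_le_one (Real.exp_pos y)]
        linarith)
  have := hmono self_mem_Ici hx hx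
  simp only [g, neg_zero, Real.exp_zero] at this
  nlinarith

/-- The defining set is all of `[0, ∞)`; being unbounded, its `sSup` is the junk value `0`. -/
lemma deltaIndex_zero : deltaIndex (fun _ => 0) = 0 := by
  refine Real.sSup_of_not_bddAbove fun hbdd => not_bddAbove_Ici (0 : ℝ) (hbdd.mono ?_)
  intro c hc
  exact ⟨hc, 1, one_pos, fun _ _ _ _ => by simp⟩

def LowerScaling (f : ℝ → ℝ) (c C : ℝ) : Prop :=
  ∀ μ l : ℝ, 1 ≤ μ → μ ≤ l → C * (f μ * μ ^ (-c)) ≤ f l * l ^ (-c)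

lemma exists_lowerScaling_of_one_lt_deltaIndex {f : ℝ → ℝ} (hδ : 1 < deltaIndex f) :
    ∃ c, 1 < c ∧ ∃ C, 0 < C ∧ LowerScaling f c C := by
  by_contra! hno
  refine hδ.not_ge (Real.sSup_le (fun c ⟨_, C, hC, hs⟩ => ?_) zero_le_one)
  by_contra! hc
  exact hno c hc C hC hs

lemma LowerScaling.mul_div_rpow_le {f : ℝ → ℝ} {c C : ℝ} (hs : LowerScaling f c C) {μ l : ℝ}
    (hμ : 1 ≤ μ) (hμl : μ ≤ l) : C * f μ * (l / μ) ^ c ≤ f l := by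
  have hμ₀ : 0 < μ := one_pos.trans_le hμ
  have hl₀ : 0 < l := hμ₀.trans_le hμl
  calc C * f μ * (l / μ) ^ c = C * (f μ * μ ^ (-c)) * l ^ c := by
        rw [Real.div_rpow hl₀.le hμ₀.le, Real.rpow_neg hμ₀.le]; ring
    _ ≤ f l * l ^ (-c) * l ^ c :=
        mul_le_mul_of_nonneg_right (hs μ l hμ hμl) (Real.rpow_nonneg hl₀.le c)
    _ = f l := by rw [mul_assoc, ← Real.rpow_add hl₀, neg_add_cancel, Real.rpow_zero, mul_one]

namespace IsBranchingMechanism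

variable {α β : ℝ} {π : Measure ℝ}

lemma ae_pos (h : IsBranchingMechanism α β π) : ∀ᵐ r ∂π, 0 < r := by
  rw [ae_iff]
  simp only [not_lt]
  exact h.carried_on_pos

lemma integrable_psi_integrand (h : IsBranchingMechanism α β π) {l : ℝ} (hl : 0 ≤ l) :
    Integrable (fun r => Real.exp (-(l * r)) - 1 + l * r) π := by
  refine Integrable.mono' (h.integ_min.const_mul (max l (l ^ 2)))
    (by fun_prop) ?_
  filter_upwards [h.ae_pos] with r hr
  have hlr : 0 ≤ l * r := mul_nonneg hl hr.le
  rw [Real.norm_eq_abs, abs_of_nonneg (exp_neg_sub_one_add_nonneg _)]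
  have hl₁ : l ≤ max l (l ^ 2) := le_max_left _ _
  have hl₂ : l ^ 2 ≤ max l (l ^ 2) := le_max_right _ _
  rcases le_total r 1 with hr1 | hr1
  · rw [min_eq_right (by nlinarith)]
    nlinarith [exp_neg_sub_one_add_le_sq hlr, sq_nonneg r]
  · rw [min_eq_left (by nlinarith)]
    nlinarith [exp_neg_sub_one_add_le_self hlr]

lemma psiFun_monotoneOn (h : IsBranchingMechanism α β π) :
    MonotoneOn (psiFun α β π) (Ici 0) := by
  intro x hx y hy hxy
  have hint : (∫ r, (Real.exp (-(x * r)) - 1 + x * r) ∂π)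
      ≤ ∫ r, (Real.exp (-(y * r)) - 1 + y * r) ∂π := by
    refine integral_mono_of_nonneg (Eventually.of_forall fun r => exp_neg_sub_one_add_nonneg _)
      (h.integrable_psi_integrand hy) ?_
    filter_upwards [h.ae_pos] with r hr
    exact monotoneOn_exp_neg_sub_one_add (mul_nonneg hx hr.le) (mul_nonneg (le_trans hx hxy) hr.le)
      (mul_le_mul_of_nonneg_right hxy hr.le)
  have hα := mul_le_mul_of_nonneg_left hxy h.alpha_nonneg
  have hβ := mul_le_mul_of_nonneg_left (pow_le_pow_left₀ hx hxy 2) h.beta_nonneg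
  unfold psiFun
  linarith

lemma psiFun_pos_of_ne_zero (h : IsBranchingMechanism α β π) (hne : ¬(α = 0 ∧ β = 0 ∧ π = 0))
    {l : ℝ} (hl : 0 < l) : 0 < psiFun α β π l := by
  have hint : 0 ≤ ∫ r, (Real.exp (-(l * r)) - 1 + l * r) ∂π :=
    integral_nonneg fun r => exp_neg_sub_one_add_nonneg _
  have hα := mul_nonneg h.alpha_nonneg hl.le
  have hβ := mul_nonneg h.beta_nonneg (sq_nonneg l)
  unfold psiFun
  by_cases hα0 : α = 0
  · by_cases hβ0 : β = 0
    · have hπ : π ≠ 0 := fun hπ => hne ⟨hα0, hβ0, hπ⟩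
      suffices 0 < ∫ r, (Real.exp (-(l * r)) - 1 + l * r) ∂π by linarith
      refine (integral_pos_iff_support_of_nonneg_ae
        (Eventually.of_forall fun r => exp_neg_sub_one_add_nonneg _)
        (h.integrable_psi_integrand hl.le)).2 (pos_iff_ne_zero.2 fun hzero => ?_)
      have : ∀ᵐ r ∂π, False := by
        filter_upwards [measure_eq_zero_iff_ae_notMem.1 hzero, h.ae_pos] with r hr hr'
        exact hr (exp_neg_sub_one_add_pos (mul_pos hl hr').ne').ne'
      exact (ae_neBot.2 hπ).ne (eventually_false_iff_eq_bot.1 this)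
    · have := mul_pos (lt_of_le_of_ne h.beta_nonneg (Ne.symm hβ0)) (pow_pos hl 2)
      linarith
  · have := mul_pos (lt_of_le_of_ne h.alpha_nonneg (Ne.symm hα0)) hl
    linarith

lemma mul_psiDeriv_le (h : IsBranchingMechanism α β π) {v : ℝ} (hv : 0 ≤ v) :
    v * psiDeriv α β π v ≤ 2 * psiFun α β π v := by
  have hint : v * ∫ r, r * (1 - Real.exp (-(v * r))) ∂π
      ≤ 2 * ∫ r, (Real.exp (-(v * r)) - 1 + v * r) ∂π := by
    rw [← integral_const_mul, ← integral_const_mul]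
    refine integral_mono_of_nonneg ?_ ((h.integrable_psi_integrand hv).const_mul 2) ?_
    all_goals filter_upwards [h.ae_pos] with r hr
    · have := Real.exp_le_one_iff.2 (neg_nonpos.2 (mul_nonneg hv hr.le))
      simp only [Pi.zero_apply]
      nlinarith [mul_nonneg hv hr.le]
    · have := mul_one_sub_exp_neg_le (mul_nonneg hv hr.le)
      linarith
  have hα := h.alpha_nonneg
  unfold psiDeriv psiFun
  nlinarith

lemma psiFun_pos (h : IsBranchingMechanism α β π)
    (hδ : 1 < deltaIndex (psiFun α β π)) {l : ℝ} (hl : 0 < l) : 0 < psiFun α β π l := by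
  refine h.psiFun_pos_of_ne_zero (fun ⟨hα, hβ, hπ⟩ => ?_) hl
  have : psiFun α β π = fun _ => 0 := by
    ext l
    simp [psiFun, hα, hβ, hπ]
  rw [this, deltaIndex_zero] at hδ
  linarith

lemma psiDeriv_le_of_le_sqrt (h : IsBranchingMechanism α β π) {v r C₁ : ℝ} (hv : 0 < v)
    (hψ : 0 < psiFun α β π v) (hr : 0 < r) (hrI : r ≤ √(C₁ * v / psiFun α β π v)) :
    psiDeriv α β π v ≤ 4 * C₁ / r ^ 2 := by
  have hr2 : r ^ 2 * psiFun α β π v ≤ C₁ * v := by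
    rw [← le_div_iff₀ hψ, ← Real.le_sqrt' hr]
    exact hrI
  have hderiv := h.mul_psiDeriv_le hv.le
  rw [le_div_iff₀ (by positivity)]
  nlinarith [mul_pos hr hr]

end IsBranchingMechanism

lemma rpow_neg_one_div_two {x : ℝ} (hx : 0 ≤ x) : x ^ (-(1 : ℝ) / 2) = (√x)⁻¹ := by
  rw [Real.sqrt_eq_rpow, ← Real.rpow_neg hx]
  norm_num

lemma integrableOn_Ioc_sub_rpow {a b : ℝ} (hab : a ≤ b) :
    IntegrableOn (fun x => (x - a) ^ (-(1 : ℝ) / 2)) (Ioc a b) := by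
  have := (intervalIntegral.intervalIntegrable_rpow' (a := 0) (b := b - a)
    (r := -(1 : ℝ) / 2) (by norm_num)).comp_sub_right a
  simp only [zero_add, sub_add_cancel] at this
  exact (intervalIntegrable_iff_integrableOn_Ioc_of_le hab).1 this

lemma integral_Ioc_sub_rpow {a b : ℝ} (hab : a ≤ b) :
    ∫ x in Ioc a b, (x - a) ^ (-(1 : ℝ) / 2) = 2 * √(b - a) := by
  rw [← intervalIntegral.integral_of_le hab,
    intervalIntegral.integral_comp_sub_right (fun x => x ^ (-(1 : ℝ) / 2)), sub_self,
    integral_rpow (Or.inl (by norm_num)), Real.sqrt_eq_rpow]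
  norm_num
  ring

lemma integrableOn_Ioi_div_rpow {p w : ℝ} (hp : p < -1) (hw : 0 < w) :
    IntegrableOn (fun x => (x / w) ^ p) (Ioi w) := by
  have := (integrableOn_Ioi_comp_mul_left_iff (fun t => t ^ p) w (inv_pos.2 hw)).2
  simp only [inv_mul_cancel₀ hw.ne', div_eq_inv_mul] at this ⊢
  exact this (integrableOn_Ioi_rpow_of_lt hp one_pos)

lemma integral_Ioi_div_rpow {p w : ℝ} (hp : p < -1) (hw : 0 < w) :
    ∫ x in Ioi w, (x / w) ^ p = -w / (p + 1) := by
  simp only [div_eq_inv_mul (b := w)]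
  rw [integral_comp_mul_left_Ioi (fun t => t ^ p) w (inv_pos.2 hw), inv_mul_cancel₀ hw.ne',
    integral_Ioi_rpow_of_lt hp one_pos, Real.one_rpow, inv_inv, smul_eq_mul]
  ring

section Integral

variable {f : ℝ → ℝ}

lemma intervalIntegrable_of_monotoneOn (hf : MonotoneOn f (Ici 0)) {a b : ℝ} (ha : 0 ≤ a)
    (hb : 0 ≤ b) : IntervalIntegrable f volume a b :=
  (hf.mono fun _ hx => le_trans (le_inf ha hb) hx.1).intervalIntegrable

lemma intervalIntegral_mono_interval_of_pos (hf : MonotoneOn f (Ici 0))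
    (hpos : ∀ x, 0 < x → 0 < f x) {a b c d : ℝ} (hc : 0 < c) (hca : c ≤ a) (hab : a ≤ b)
    (hbd : b ≤ d) : ∫ x in a..b, f x ≤ ∫ x in c..d, f x :=
  intervalIntegral.integral_mono_interval hca hab hbd
    ((ae_restrict_iff' measurableSet_Ioc).2 (ae_of_all _ fun x hx => (hpos x (hc.trans hx.1)).le))
    (intervalIntegrable_of_monotoneOn hf hc.le (by linarith))

lemma mul_sub_le_intervalIntegral (hf : MonotoneOn f (Ici 0)) {v b : ℝ} (hv : 0 ≤ v)
    (hvb : v ≤ b) : f v * (b - v) ≤ ∫ a in v..b, f a := by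
  have := intervalIntegral.integral_mono_on hvb intervalIntegrable_const
    (intervalIntegrable_of_monotoneOn hf hv (hv.trans hvb))
    fun a ha => hf hv (hv.trans ha.1) ha.1
  simpa [mul_comm] using this

lemma mul_div_rpow_le_intervalIntegral (hf : MonotoneOn f (Ici 0))
    (hpos : ∀ x, 0 < x → 0 < f x) {c C : ℝ} (hs : LowerScaling f c C) {v b : ℝ} (hv : 1 ≤ v)
    (hb : 2 * v ≤ b) : C * v * f v * (b / (2 * v)) ^ (c + 1) ≤ ∫ a in v..b, f a := by
  have hv₀ : 0 < v := one_pos.trans_le hv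
  have hb₀ : 0 < b / 2 := by linarith
  have hq : 0 < b / (2 * v) := div_pos (by linarith) (by linarith)
  calc C * v * f v * (b / (2 * v)) ^ (c + 1) = b / 2 * (C * f v * (b / 2 / v) ^ c) := by
        rw [div_div, Real.rpow_add_one hq.ne']
        field_simp
    _ ≤ b / 2 * f (b / 2) :=
        mul_le_mul_of_nonneg_left (hs.mul_div_rpow_le hv (by linarith)) hb₀.le
    _ = f (b / 2) * (b - b / 2) := by ring
    _ ≤ ∫ a in b / 2..b, f a := mul_sub_le_intervalIntegral hf hb₀.le (by linarith)
    _ ≤ ∫ a in v..b, f a :=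
        intervalIntegral_mono_interval_of_pos hf hpos hv₀ (by linarith) (by linarith) le_rfl

lemma intervalIntegral_pos (hf : MonotoneOn f (Ici 0)) (hpos : ∀ x, 0 < x → 0 < f x)
    {v b : ℝ} (hv : 0 < v) (hvb : v < b) : 0 < ∫ a in v..b, f a :=
  (mul_pos (hpos v hv) (sub_pos.2 hvb)).trans_le (mul_sub_le_intervalIntegral hf hv.le hvb.le)

lemma rpow_intervalIntegral_le_near (hf : MonotoneOn f (Ici 0)) (hpos : ∀ x, 0 < x → 0 < f x)
    {v b : ℝ} (hv : 0 < v) (hvb : v < b) :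
    (∫ a in v..b, f a) ^ (-(1 : ℝ) / 2) ≤ f v ^ (-(1 : ℝ) / 2) * (b - v) ^ (-(1 : ℝ) / 2) := by
  rw [← Real.mul_rpow (hpos v hv).le (by linarith)]
  exact Real.rpow_le_rpow_of_nonpos (mul_pos (hpos v hv) (by linarith))
    (mul_sub_le_intervalIntegral hf hv.le hvb.le) (by norm_num)

lemma rpow_intervalIntegral_le_tail (hf : MonotoneOn f (Ici 0)) (hpos : ∀ x, 0 < x → 0 < f x)
    {c C : ℝ} (hC : 0 < C) (hs : LowerScaling f c C) {v b : ℝ} (hv : 1 ≤ v) (hb : 2 * v ≤ b) :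
    (∫ a in v..b, f a) ^ (-(1 : ℝ) / 2)
      ≤ (C * v * f v) ^ (-(1 : ℝ) / 2) * (b / (2 * v)) ^ ((c + 1) * (-(1 : ℝ) / 2)) := by
  have hv₀ : 0 < v := one_pos.trans_le hv
  have hK : 0 < C * v * f v := mul_pos (mul_pos hC hv₀) (hpos v hv₀)
  have hq : 0 < b / (2 * v) := div_pos (by linarith) (by linarith)
  rw [Real.rpow_mul hq.le, ← Real.mul_rpow hK.le (Real.rpow_nonneg hq.le _)]
  exact Real.rpow_le_rpow_of_nonpos (mul_pos hK (Real.rpow_pos_of_pos hq _))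
    (mul_div_rpow_le_intervalIntegral hf hpos hs hv hb) (by norm_num)

lemma antitoneOn_rpow_intervalIntegral (hf : MonotoneOn f (Ici 0))
    (hpos : ∀ x, 0 < x → 0 < f x) {v : ℝ} (hv : 0 < v) :
    AntitoneOn (fun b => (∫ a in v..b, f a) ^ (-(1 : ℝ) / 2)) (Ioi v) :=
  fun _ hx _ _ hxy => Real.rpow_le_rpow_of_nonpos (intervalIntegral_pos hf hpos hv hx)
    (intervalIntegral_mono_interval_of_pos hf hpos hv le_rfl (le_of_lt hx) hxy) (by norm_num)

lemma integrableOn_rpow_intervalIntegral_of_le (hf : MonotoneOn f (Ici 0))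
    (hpos : ∀ x, 0 < x → 0 < f x) {v : ℝ} (hv : 0 < v) {s : Set ℝ} (hs : MeasurableSet s)
    (hsv : s ⊆ Ioi v) {g : ℝ → ℝ} (hg : IntegrableOn g s)
    (hle : ∀ b ∈ s, (∫ a in v..b, f a) ^ (-(1 : ℝ) / 2) ≤ g b) :
    IntegrableOn (fun b => (∫ a in v..b, f a) ^ (-(1 : ℝ) / 2)) s := by
  refine hg.mono' (aemeasurable_restrict_of_antitoneOn hs
    ((antitoneOn_rpow_intervalIntegral hf hpos hv).mono hsv)).aestronglyMeasurable ?_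
  refine (ae_restrict_iff' hs).2 (ae_of_all _ fun b hb => ?_)
  rw [Real.norm_of_nonneg (Real.rpow_nonneg (intervalIntegral_pos hf hpos hv (hsv hb)).le _)]
  exact hle b hb

lemma integrableOn_Ioi_rpow_intervalIntegral (hf : MonotoneOn f (Ici 0))
    (hpos : ∀ x, 0 < x → 0 < f x) {c C : ℝ} (hc : 1 < c) (hC : 0 < C) (hs : LowerScaling f c C)
    {v : ℝ} (hv : 0 < v) : IntegrableOn (fun b => (∫ a in v..b, f a) ^ (-(1 : ℝ) / 2)) (Ioi v) := by
  set w := max v 1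
  have hw : 1 ≤ w := le_max_right v 1
  have hvw : v ≤ w := le_max_left v 1
  have hp : (c + 1) * (-(1 : ℝ) / 2) < -1 := by linarith
  rw [← Ioc_union_Ioi_eq_Ioi (show v ≤ 2 * w by linarith)]
  refine IntegrableOn.union ?_ ?_
  · exact integrableOn_rpow_intervalIntegral_of_le hf hpos hv measurableSet_Ioc
      Ioc_subset_Ioi_self ((integrableOn_Ioc_sub_rpow (by linarith)).const_mul _)
      fun b hb => rpow_intervalIntegral_le_near hf hpos hv hb.1
  · refine integrableOn_rpow_intervalIntegral_of_le hf hpos hv measurableSet_Ioi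
      (Ioi_subset_Ioi (by linarith))
      ((integrableOn_Ioi_div_rpow hp (by linarith)).const_mul ((C * w * f w) ^ (-(1 : ℝ) / 2)))
      fun b (hb : 2 * w < b) => ?_
    have hwb : w < b := by linarith
    calc (∫ a in v..b, f a) ^ (-(1 : ℝ) / 2) ≤ (∫ a in w..b, f a) ^ (-(1 : ℝ) / 2) :=
          Real.rpow_le_rpow_of_nonpos (intervalIntegral_pos hf hpos (by linarith) hwb)
            (intervalIntegral_mono_interval_of_pos hf hpos hv hvw hwb.le le_rfl) (by norm_num)
      _ ≤ _ := rpow_intervalIntegral_le_tail hf hpos hC hs hw hb.le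

lemma setIntegral_Ioi_rpow_intervalIntegral_le (hf : MonotoneOn f (Ici 0))
    (hpos : ∀ x, 0 < x → 0 < f x) {c C : ℝ} (hc : 1 < c) (hC : 0 < C) (hs : LowerScaling f c C)
    {v : ℝ} (hv : 1 ≤ v) :
    ∫ b in Ioi v, (∫ a in v..b, f a) ^ (-(1 : ℝ) / 2) ≤ (2 + 4 / ((c - 1) * √C)) * √(v / f v) := by
  have hv₀ : 0 < v := one_pos.trans_le hv
  have hfv : 0 < f v := hpos v hv₀
  have hp : (c + 1) * (-(1 : ℝ) / 2) < -1 := by linarith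
  have hint := integrableOn_Ioi_rpow_intervalIntegral hf hpos hc hC hs hv₀
  have hint_near := hint.mono_set (show Ioc v (2 * v) ⊆ Ioi v from Ioc_subset_Ioi_self)
  have hint_tail := hint.mono_set (Ioi_subset_Ioi (show v ≤ 2 * v by linarith))
  have hnear : ∫ b in Ioc v (2 * v), (∫ a in v..b, f a) ^ (-(1 : ℝ) / 2) ≤ 2 * √(v / f v) :=
    calc _ ≤ ∫ b in Ioc v (2 * v), f v ^ (-(1 : ℝ) / 2) * (b - v) ^ (-(1 : ℝ) / 2) :=
          setIntegral_mono_on hint_near ((integrableOn_Ioc_sub_rpow (by linarith)).const_mul _)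
            measurableSet_Ioc fun b hb => rpow_intervalIntegral_le_near hf hpos hv₀ hb.1
      _ = 2 * √(v / f v) := by
          rw [integral_const_mul, integral_Ioc_sub_rpow (by linarith), rpow_neg_one_div_two hfv.le,
            Real.sqrt_div' _ hfv.le, show 2 * v - v = v by ring]
          ring
  have htail : ∫ b in Ioi (2 * v), (∫ a in v..b, f a) ^ (-(1 : ℝ) / 2)
      ≤ 4 / ((c - 1) * √C) * √(v / f v) :=
    calc _ ≤ ∫ b in Ioi (2 * v),
            (C * v * f v) ^ (-(1 : ℝ) / 2) * (b / (2 * v)) ^ ((c + 1) * (-(1 : ℝ) / 2)) :=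
          setIntegral_mono_on hint_tail
            ((integrableOn_Ioi_div_rpow hp (by linarith)).const_mul _) measurableSet_Ioi
            fun b (hb : 2 * v < b) => rpow_intervalIntegral_le_tail hf hpos hC hs hv hb.le
      _ = 4 / ((c - 1) * √C) * √(v / f v) := by
          have : 0 < √C := Real.sqrt_pos.2 hC
          have : 0 < √(f v) := Real.sqrt_pos.2 hfv
          have : c - 1 ≠ 0 := by linarith
          rw [integral_const_mul, integral_Ioi_div_rpow hp (by linarith),
            rpow_neg_one_div_two (by positivity), Real.sqrt_mul (by positivity),
            Real.sqrt_mul hC.le, Real.sqrt_div' _ hfv.le]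
          field_simp
          rw [Real.sq_sqrt hv₀.le, show -(c + 1) + 2 = -(c - 1) by ring]
          field_simp
          ring
  rw [← Ioc_union_Ioi_eq_Ioi (show v ≤ 2 * v by linarith),
    setIntegral_union Ioc_disjoint_Ioi_same measurableSet_Ioi hint_near hint_tail]
  linarith

end Integral

/-- if δ > 1 then I(v) = ∫_v^∞ (∫_v^b ψ(a) da)^{−1/2} db is finite
for every v > 0, and there is C₁ > 0 with (a) I(v) ≤ (C₁ v/ψ(v))^{1/2} for v ≥ 1,
and (b) for all v > 1 and 0 < r ≤ I(v), ψ′(v) ≤ 4C₁·r^{−2}. -/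
theorem statement10 (α β : ℝ) (π : Measure ℝ) (h : IsBranchingMechanism α β π)
    (hδ : 1 < deltaIndex (psiFun α β π)) :
    (∀ v : ℝ, 0 < v →
      IntegrableOn (fun b => (∫ a in v..b, psiFun α β π a) ^ (-(1 : ℝ) / 2))
        (Set.Ioi v)) ∧
    ∃ C₁ : ℝ, 0 < C₁ ∧
      (∀ v : ℝ, 1 ≤ v →
        (∫ b in Set.Ioi v, (∫ a in v..b, psiFun α β π a) ^ (-(1 : ℝ) / 2))
          ≤ Real.sqrt (C₁ * v / psiFun α β π v)) ∧
      (∀ v r : ℝ, 1 < v → 0 < r →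
        r ≤ (∫ b in Set.Ioi v, (∫ a in v..b, psiFun α β π a) ^ (-(1 : ℝ) / 2)) →
        psiDeriv α β π v ≤ 4 * C₁ / r ^ 2) := by
  obtain ⟨c, hc, C, hC, hs⟩ := exists_lowerScaling_of_one_lt_deltaIndex hδ
  have hmono := h.psiFun_monotoneOn
  have hpos : ∀ x, 0 < x → 0 < psiFun α β π x := fun x hx => h.psiFun_pos hδ hx
  set D := 2 + 4 / ((c - 1) * √C)
  have hD : 0 < D := by
    have : 0 < (c - 1) * √C := mul_pos (by linarith) (Real.sqrt_pos.2 hC)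
    positivity
  have hI : ∀ v : ℝ, 1 ≤ v → ∫ b in Ioi v, (∫ a in v..b, psiFun α β π a) ^ (-(1 : ℝ) / 2)
      ≤ √(D ^ 2 * v / psiFun α β π v) := fun v hv => by
    rw [mul_div_assoc, Real.sqrt_mul (sq_nonneg D), Real.sqrt_sq hD.le]
    exact setIntegral_Ioi_rpow_intervalIntegral_le hmono hpos hc hC hs hv
  refine ⟨fun v hv => integrableOn_Ioi_rpow_intervalIntegral hmono hpos hc hC hs hv,
    D ^ 2, by positivity, hI, fun v r hv hr hrI => ?_⟩
  exact h.psiDeriv_le_of_le_sqrt (by linarith) (hpos v (by linarith)) hr (hrI.trans (hI v hv.le))
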